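/- Let M₁ and M₂ be two finite Markov chains on the same state set Q with the same losing components LC (LC₁ = LC₂ = LC) and winning components satisfying WC₂ ⊆ WC₁, whose transition matrices agree on all states outside WC₁ ∪ LC. Then for every initial state q, the probability of reaching an accepting BSCC in M₁ is at least that in M₂: P_{M₁}(q ⊨ ◇U^A₁) ≥ P_{M₂}(q ⊨ ◇U^A₂). -/
import Mathlib


open scoped Classical

/-- Bottom strongly connected component of a finite Markov chain. -/
def IsBSCC {Q : Type*} [Fintype Q] (T : Q → Q → ℝ) (B : Finset Q) : Prop :=
  (∀ q ∈ B, ∀ t ∈ B,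
    Relation.ReflTransGen (fun u v => u ∈ B ∧ v ∈ B ∧ 0 < T u v) q t) ∧
  (∀ B' : Finset Q, B ⊆ B' →
    (∀ q ∈ B', ∀ t ∈ B',
      Relation.ReflTransGen (fun u v => u ∈ B' ∧ v ∈ B' ∧ 0 < T u v) q t) → B' = B) ∧
  (∀ s ∈ B, ∑ t ∈ B, T s t = 1)

/-- Probability of reaching the set `S` within `m` steps, starting from a given state. -/
noncomputable def reachN {Q : Type*} [Fintype Q] (T : Q → Q → ℝ) (S : Set Q) :
    ℕ → Q → ℝ
  | 0, q => if q ∈ S then 1 else 0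
  | m + 1, q => if q ∈ S then 1 else ∑ t, T q t * reachN T S m t

/-- Probability of eventually reaching `S` from `q`: `P(q ⊨ ◇S)`. -/
noncomputable def reachProb {Q : Type*} [Fintype Q] (T : Q → Q → ℝ) (S : Set Q)
    (q : Q) : ℝ :=
  ⨆ m : ℕ, reachN T S m q

section Helpers

variable {Q : Type*} [Fintype Q] (T : Q → Q → ℝ) (S : Set Q)

lemma reachN_nonneg (hT0 : ∀ q t, 0 ≤ T q t) : ∀ m q, 0 ≤ reachN T S m q := by
  intro m
  induction m with
  | zero => intro q; simp only [reachN]; split <;> norm_num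
  | succ m ih =>
      intro q
      simp only [reachN]
      split
      · norm_num
      · exact Finset.sum_nonneg fun t _ => mul_nonneg (hT0 q t) (ih t)

lemma reachN_le_one (hT0 : ∀ q t, 0 ≤ T q t) (hT1 : ∀ q, ∑ t, T q t = 1) :
    ∀ m q, reachN T S m q ≤ 1 := by
  intro m
  induction m with
  | zero => intro q; simp only [reachN]; split <;> norm_num
  | succ m ih =>
      intro q
      simp only [reachN]
      split
      · exact le_refl 1
      · calc ∑ t, T q t * reachN T S m t ≤ ∑ t, T q t * 1 := by
              exact Finset.sum_le_sum fun t _ => mul_le_mul_of_nonneg_left (ih t) (hT0 q t)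
          _ = 1 := by simpa using hT1 q

lemma reachN_mono (hT0 : ∀ q t, 0 ≤ T q t) :
    ∀ m q, reachN T S m q ≤ reachN T S (m + 1) q := by
  intro m
  induction m with
  | zero =>
      intro q
      simp only [reachN]
      split
      · exact le_refl 1
      · exact Finset.sum_nonneg fun t _ => mul_nonneg (hT0 q t) (reachN_nonneg T S hT0 0 t)
  | succ m ih =>
      intro q
      simp only [reachN]
      split
      · exact le_refl 1
      · exact Finset.sum_le_sum fun t _ => mul_le_mul_of_nonneg_left (ih t) (hT0 q t)

lemma reachN_monotone (hT0 : ∀ q t, 0 ≤ T q t) (q : Q) :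
    Monotone fun m => reachN T S m q :=
  monotone_nat_of_le_succ fun m => reachN_mono T S hT0 m q

lemma reachN_bdd (hT0 : ∀ q t, 0 ≤ T q t) (hT1 : ∀ q, ∑ t, T q t = 1) (q : Q) :
    BddAbove (Set.range fun m => reachN T S m q) :=
  ⟨1, by rintro x ⟨m, rfl⟩; exact reachN_le_one T S hT0 hT1 m q⟩

lemma reachN_le_reachProb (hT0 : ∀ q t, 0 ≤ T q t) (hT1 : ∀ q, ∑ t, T q t = 1)
    (m : ℕ) (q : Q) : reachN T S m q ≤ reachProb T S q :=
  le_ciSup (reachN_bdd T S hT0 hT1 q) m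

lemma reachProb_nonneg (hT0 : ∀ q t, 0 ≤ T q t) (hT1 : ∀ q, ∑ t, T q t = 1) (q : Q) :
    0 ≤ reachProb T S q :=
  le_trans (reachN_nonneg T S hT0 0 q) (reachN_le_reachProb T S hT0 hT1 0 q)

lemma reachProb_le_one (hT0 : ∀ q t, 0 ≤ T q t) (hT1 : ∀ q, ∑ t, T q t = 1) (q : Q) :
    reachProb T S q ≤ 1 :=
  ciSup_le fun m => reachN_le_one T S hT0 hT1 m q

lemma reachProb_mem (hT0 : ∀ q t, 0 ≤ T q t) (hT1 : ∀ q, ∑ t, T q t = 1)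
    {q : Q} (hq : q ∈ S) : reachProb T S q = 1 := by
  refine le_antisymm (reachProb_le_one T S hT0 hT1 q) ?_
  have : reachN T S 0 q = 1 := by simp [reachN, hq]
  calc (1:ℝ) = reachN T S 0 q := this.symm
    _ ≤ _ := reachN_le_reachProb T S hT0 hT1 0 q

lemma reachN_tendsto (hT0 : ∀ q t, 0 ≤ T q t) (hT1 : ∀ q, ∑ t, T q t = 1) (q : Q) :
    Filter.Tendsto (fun m => reachN T S m q) Filter.atTop (nhds (reachProb T S q)) :=
  tendsto_atTop_ciSup (reachN_monotone T S hT0 q) (reachN_bdd T S hT0 hT1 q)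

/-- One-step fixed point inequality. -/
lemma reachProb_step (hT0 : ∀ q t, 0 ≤ T q t) (hT1 : ∀ q, ∑ t, T q t = 1) (q : Q) :
    ∑ t, T q t * reachProb T S t ≤ reachProb T S q := by
  have htend : Filter.Tendsto (fun m => ∑ t, T q t * reachN T S m t) Filter.atTop
      (nhds (∑ t, T q t * reachProb T S t)) := by
    exact tendsto_finset_sum _ fun t _ => (reachN_tendsto T S hT0 hT1 t).const_mul _
  refine le_of_tendsto' htend fun m => ?_
  have h1 : ∑ t, T q t * reachN T S m t ≤ reachN T S (m+1) q := by
    simp only [reachN]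
    split
    · calc ∑ t, T q t * reachN T S m t ≤ ∑ t, T q t * 1 :=
            Finset.sum_le_sum fun t _ =>
              mul_le_mul_of_nonneg_left (reachN_le_one T S hT0 hT1 m t) (hT0 q t)
        _ = 1 := by simpa using hT1 q
    · exact le_refl _
  exact h1.trans (reachN_le_reachProb T S hT0 hT1 (m+1) q)

/-- Composition: if every state of `W` reaches `S` with probability 1,
then reaching `W` is at most reaching `S`. -/
lemma reachProb_comp (hT0 : ∀ q t, 0 ≤ T q t) (hT1 : ∀ q, ∑ t, T q t = 1)
    (W : Set Q) (hW : ∀ w ∈ W, reachProb T S w = 1) (q : Q) :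
    reachProb T W q ≤ reachProb T S q := by
  refine ciSup_le fun m => ?_
  induction m generalizing q with
  | zero =>
      simp only [reachN]
      split
      · rename_i h; exact (hW q h).ge
      · exact reachProb_nonneg T S hT0 hT1 q
  | succ m ih =>
      simp only [reachN]
      split
      · rename_i h; exact (hW q h).ge
      · calc ∑ t, T q t * reachN T W m t ≤ ∑ t, T q t * reachProb T S t :=
              Finset.sum_le_sum fun t _ => mul_le_mul_of_nonneg_left (ih t) (hT0 q t)
          _ ≤ reachProb T S q := reachProb_step T S hT0 hT1 q

end Helpers

/-- Comparison of probabilities of reaching `LC` under two chains agreeing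
outside `WC₁ ∪ LC`, where from `WC₁` the first chain never reaches `LC`. -/
lemma reachLC_compare {Q : Type*} [Fintype Q] (T₁ T₂ : Q → Q → ℝ)
    (hT₁0 : ∀ q t, 0 ≤ T₁ q t) (hT₁1 : ∀ q, ∑ t, T₁ q t = 1)
    (hT₂0 : ∀ q t, 0 ≤ T₂ q t) (hT₂1 : ∀ q, ∑ t, T₂ q t = 1)
    (WC₁ LC : Set Q)
    (hzero : ∀ q ∈ WC₁, reachProb T₁ LC q = 0)
    (hagree : ∀ q, q ∉ WC₁ ∪ LC → ∀ t, T₁ q t = T₂ q t) :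
    ∀ q, reachProb T₁ LC q ≤ reachProb T₂ LC q := by
  intro q
  refine ciSup_le fun m => ?_
  induction m generalizing q with
  | zero =>
      simp only [reachN]
      split
      · rename_i h; exact (reachProb_mem T₂ LC hT₂0 hT₂1 h).ge
      · exact reachProb_nonneg T₂ LC hT₂0 hT₂1 q
  | succ m ih =>
      by_cases hLCq : q ∈ LC
      · simp only [reachN, if_pos hLCq]
        exact (reachProb_mem T₂ LC hT₂0 hT₂1 hLCq).ge
      · by_cases hWq : q ∈ WC₁
        · have h0 : reachN T₁ LC (m+1) q ≤ 0 :=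
            (reachN_le_reachProb T₁ LC hT₁0 hT₁1 (m+1) q).trans (hzero q hWq).le
          exact h0.trans (reachProb_nonneg T₂ LC hT₂0 hT₂1 q)
        · have hout : q ∉ WC₁ ∪ LC := by
            simp [hWq, hLCq]
          simp only [reachN, if_neg hLCq]
          calc ∑ t, T₁ q t * reachN T₁ LC m t
              = ∑ t, T₂ q t * reachN T₁ LC m t := by
                refine Finset.sum_congr rfl fun t _ => by rw [hagree q hout t]
            _ ≤ ∑ t, T₂ q t * reachProb T₂ LC t :=
                Finset.sum_le_sum fun t _ => mul_le_mul_of_nonneg_left (ih t) (hT₂0 q t)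
            _ ≤ reachProb T₂ LC q := reachProb_step T₂ LC hT₂0 hT₂1 q

/-- Two finite Markov chains `M₁, M₂` on the same states with identical
losing components `LC`, winning components `WC₂ ⊆ WC₁`, and transition matrices
agreeing outside `WC₁ ∪ LC`, satisfy
`P_{M₁}(q ⊨ ◇U^A₁) ≥ P_{M₂}(q ⊨ ◇U^A₂)` for every initial state `q`. -/
theorem stmt_16 {Q : Type*} [Fintype Q]
    (T₁ T₂ : Q → Q → ℝ)
    (hT₁0 : ∀ q t, 0 ≤ T₁ q t) (hT₁1 : ∀ q, ∑ t, T₁ q t = 1)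
    (hT₂0 : ∀ q t, 0 ≤ T₂ q t) (hT₂1 : ∀ q, ∑ t, T₂ q t = 1)
    (acc : Finset Q → Prop)
    (UA₁ UA₂ UN₁ UN₂ WC₁ WC₂ LC₁ LC₂ : Set Q)
    (hUA₁ : UA₁ = {q | ∃ B : Finset Q, IsBSCC T₁ B ∧ acc B ∧ q ∈ B})
    (hUA₂ : UA₂ = {q | ∃ B : Finset Q, IsBSCC T₂ B ∧ acc B ∧ q ∈ B})
    (hUN₁ : UN₁ = {q | ∃ B : Finset Q, IsBSCC T₁ B ∧ ¬ acc B ∧ q ∈ B})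
    (hUN₂ : UN₂ = {q | ∃ B : Finset Q, IsBSCC T₂ B ∧ ¬ acc B ∧ q ∈ B})
    (hWC₁ : WC₁ = {q | reachProb T₁ UA₁ q = 1})
    (hWC₂ : WC₂ = {q | reachProb T₂ UA₂ q = 1})
    (hLC₁ : LC₁ = {q | reachProb T₁ UN₁ q = 1})
    (hLC₂ : LC₂ = {q | reachProb T₂ UN₂ q = 1})
    (hLC : LC₁ = LC₂)
    (hWC : WC₂ ⊆ WC₁)
    (hagree : ∀ q, q ∉ WC₁ ∪ LC₁ → ∀ t, T₁ q t = T₂ q t)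
    (htotal₁ : ∀ q, reachProb T₁ WC₁ q + reachProb T₁ LC₁ q = 1)
    (htotal₂ : ∀ q, reachProb T₂ WC₂ q + reachProb T₂ LC₂ q = 1) :
    ∀ q : Q, reachProb T₂ UA₂ q ≤ reachProb T₁ UA₁ q := by
  
  intro q
  have hUAsub : ∀ w ∈ UA₂, reachProb T₂ WC₂ w = 1 := by
    intro w hw
    refine reachProb_mem T₂ WC₂ hT₂0 hT₂1 ?_
    rw [hWC₂]
    exact reachProb_mem T₂ UA₂ hT₂0 hT₂1 hw
  have h1 : reachProb T₂ UA₂ q ≤ reachProb T₂ WC₂ q :=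
    reachProb_comp T₂ WC₂ hT₂0 hT₂1 UA₂ hUAsub q
  have h2 : reachProb T₁ WC₁ q ≤ reachProb T₁ UA₁ q :=
    reachProb_comp T₁ UA₁ hT₁0 hT₁1 WC₁ (fun w hw => by rw [hWC₁] at hw; exact hw) q
  have hzero : ∀ w ∈ WC₁, reachProb T₁ LC₁ w = 0 := by
    intro w hw
    have ht := htotal₁ w
    have hW1 : reachProb T₁ WC₁ w = 1 := reachProb_mem T₁ WC₁ hT₁0 hT₁1 hw
    linarith
  have hcomp : reachProb T₁ LC₁ q ≤ reachProb T₂ LC₁ q :=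
    reachLC_compare T₁ T₂ hT₁0 hT₁1 hT₂0 hT₂1 WC₁ LC₁ hzero hagree q
  rw [hLC] at hcomp
  have h3 : reachProb T₂ WC₂ q ≤ reachProb T₁ WC₁ q := by
    have ht1 := htotal₁ q
    have ht2 := htotal₂ q
    rw [hLC] at ht1
    linarith
  exact h1.trans (h3.trans h2)
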